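/- Any finite sequence x_1, ..., x_n of pairwise distinct natural numbers contains a subsequence x_{i_1}, ..., x_{i_l} with l ≥ n/5 such that either x_{i_1} ≤ x_{i_j} ≤ x_{i_l} for all 1 ≤ j ≤ l, or x_{i_l} ≤ x_{i_j} ≤ x_{i_1} for all 1 ≤ j ≤ l. -/
import Mathlib

lemma min'_eq_of {α : Type*} [LinearOrder α] {S : Finset α} (hS : S.Nonempty) (m : α)
    (hm : m ∈ S) (h : ∀ j ∈ S, m ≤ j) : S.min' hS = m :=
  le_antisymm (S.min'_le m hm) (S.le_min' hS m h)

lemma max'_eq_of {α : Type*} [LinearOrder α] {S : Finset α} (hS : S.Nonempty) (m : α)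
    (hm : m ∈ S) (h : ∀ j ∈ S, j ≤ m) : S.max' hS = m :=
  le_antisymm (S.max'_le hS m h) (S.le_max' m hm)

/-- If the minimum occurs no later than the maximum, there is a good finset of
size at least `n/5`. -/
lemma exists_good_finset (n : ℕ) (hn : 0 < n) (x : Fin n → ℕ) (a b : Fin n)
    (hab : a ≤ b) (hmin : ∀ j, x a ≤ x j) (hmax : ∀ j, x j ≤ x b) :
    ∃ (S : Finset (Fin n)) (hS : S.Nonempty), 5 * S.card ≥ n ∧
      ((∀ j ∈ S, x (S.min' hS) ≤ x j ∧ x j ≤ x (S.max' hS)) ∨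
       (∀ j ∈ S, x (S.max' hS) ≤ x j ∧ x j ≤ x (S.min' hS))) := by
  set z : Fin n := ⟨0, hn⟩ with hz
  set w : Fin n := ⟨n - 1, Nat.sub_lt hn one_pos⟩ with hw
  have hzle : ∀ j : Fin n, z ≤ j := fun j => Fin.mk_le_of_le_val (Nat.zero_le _)
  have hlew : ∀ j : Fin n, j ≤ w := fun j => by
    rw [Fin.le_def]; have := j.isLt; simp [hw]; omega
  -- the five sets
  set S1 : Finset (Fin n) := Finset.Icc a b with hS1
  set S2 : Finset (Fin n) := (Finset.Iic a).filter (fun j => x j ≤ x z) with hS2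
  set S3 : Finset (Fin n) := insert b ((Finset.Iic a).filter (fun j => x z ≤ x j)) with hS3
  set S4 : Finset (Fin n) := (Finset.Ici b).filter (fun j => x w ≤ x j) with hS4
  set S5 : Finset (Fin n) := insert a ((Finset.Ici b).filter (fun j => x j ≤ x w)) with hS5
  -- cardinality facts
  have hc23 : S2.card + S3.card ≥ (a : ℕ) + 1 := by
    have hsub : Finset.Iic a ⊆ S2 ∪ (Finset.Iic a).filter (fun j => x z ≤ x j) := by
      intro j hj
      rcases le_total (x j) (x z) with h | h
      · exact Finset.mem_union_left _ (Finset.mem_filter.mpr ⟨hj, h⟩)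
      · exact Finset.mem_union_right _ (Finset.mem_filter.mpr ⟨hj, h⟩)
    have h1 : (Finset.Iic a).card ≤ S2.card + ((Finset.Iic a).filter (fun j => x z ≤ x j)).card :=
      le_trans (Finset.card_le_card hsub) (Finset.card_union_le _ _)
    have h2 : ((Finset.Iic a).filter (fun j => x z ≤ x j)).card ≤ S3.card :=
      Finset.card_le_card (Finset.subset_insert _ _)
    have h3 : (Finset.Iic a).card = (a : ℕ) + 1 := Fin.card_Iic a
    omega
  have hc45 : S4.card + S5.card ≥ n - (b : ℕ) := by
    have hsub : Finset.Ici b ⊆ S4 ∪ (Finset.Ici b).filter (fun j => x j ≤ x w) := by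
      intro j hj
      rcases le_total (x w) (x j) with h | h
      · exact Finset.mem_union_left _ (Finset.mem_filter.mpr ⟨hj, h⟩)
      · exact Finset.mem_union_right _ (Finset.mem_filter.mpr ⟨hj, h⟩)
    have h1 : (Finset.Ici b).card ≤ S4.card + ((Finset.Ici b).filter (fun j => x j ≤ x w)).card :=
      le_trans (Finset.card_le_card hsub) (Finset.card_union_le _ _)
    have h2 : ((Finset.Ici b).filter (fun j => x j ≤ x w)).card ≤ S5.card :=
      Finset.card_le_card (Finset.subset_insert _ _)
    have h3 : (Finset.Ici b).card = n - (b : ℕ) := Fin.card_Ici b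
    omega
  have hc1 : S1.card = (b : ℕ) + 1 - (a : ℕ) := Fin.card_Icc a b
  have hblt : (b : ℕ) < n := b.isLt
  have haleb : (a : ℕ) ≤ (b : ℕ) := hab
  -- one of the five sets is big
  have hbig : 5 * S1.card ≥ n ∨ 5 * S2.card ≥ n ∨ 5 * S3.card ≥ n ∨
      5 * S4.card ≥ n ∨ 5 * S5.card ≥ n := by omega
  rcases hbig with h | h | h | h | h
  · -- S1 = Icc a b
    have hne : S1.Nonempty := ⟨a, Finset.mem_Icc.mpr ⟨le_refl a, hab⟩⟩
    refine ⟨S1, hne, h, Or.inl ?_⟩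
    have hmin' : S1.min' hne = a := min'_eq_of hne a (Finset.mem_Icc.mpr ⟨le_refl a, hab⟩)
      (fun j hj => (Finset.mem_Icc.mp hj).1)
    have hmax' : S1.max' hne = b := max'_eq_of hne b (Finset.mem_Icc.mpr ⟨hab, le_refl b⟩)
      (fun j hj => (Finset.mem_Icc.mp hj).2)
    rw [hmin', hmax']
    exact fun j _ => ⟨hmin j, hmax j⟩
  · -- S2
    have hzm : z ∈ S2 := Finset.mem_filter.mpr ⟨Finset.mem_Iic.mpr (hzle a), le_refl _⟩
    have ham : a ∈ S2 := Finset.mem_filter.mpr ⟨Finset.mem_Iic.mpr (le_refl a), hmin z⟩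
    have hne : S2.Nonempty := ⟨z, hzm⟩
    refine ⟨S2, hne, h, Or.inr ?_⟩
    have hmin' : S2.min' hne = z := min'_eq_of hne z hzm (fun j _ => hzle j)
    have hmax' : S2.max' hne = a := max'_eq_of hne a ham
      (fun j hj => Finset.mem_Iic.mp (Finset.mem_filter.mp hj).1)
    rw [hmin', hmax']
    exact fun j hj => ⟨hmin j, (Finset.mem_filter.mp hj).2⟩
  · -- S3
    have hzm : z ∈ S3 := Finset.mem_insert_of_mem
      (Finset.mem_filter.mpr ⟨Finset.mem_Iic.mpr (hzle a), le_refl _⟩)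
    have hbm : b ∈ S3 := Finset.mem_insert_self _ _
    have hne : S3.Nonempty := ⟨b, hbm⟩
    refine ⟨S3, hne, h, Or.inl ?_⟩
    have hmin' : S3.min' hne = z := min'_eq_of hne z hzm (fun j _ => hzle j)
    have hmax' : S3.max' hne = b := max'_eq_of hne b hbm (by
      intro j hj
      rcases Finset.mem_insert.mp hj with rfl | hj
      · exact le_refl _
      · exact le_trans (Finset.mem_Iic.mp (Finset.mem_filter.mp hj).1) hab)
    rw [hmin', hmax']
    intro j hj
    rcases Finset.mem_insert.mp hj with rfl | hj
    · exact ⟨hmax z, hmax j⟩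
    · exact ⟨(Finset.mem_filter.mp hj).2, hmax j⟩
  · -- S4
    have hbm : b ∈ S4 := Finset.mem_filter.mpr ⟨Finset.mem_Ici.mpr (le_refl b), hmax w⟩
    have hwm : w ∈ S4 := Finset.mem_filter.mpr ⟨Finset.mem_Ici.mpr (hlew b), le_refl _⟩
    have hne : S4.Nonempty := ⟨b, hbm⟩
    refine ⟨S4, hne, h, Or.inr ?_⟩
    have hmin' : S4.min' hne = b := min'_eq_of hne b hbm
      (fun j hj => Finset.mem_Ici.mp (Finset.mem_filter.mp hj).1)
    have hmax' : S4.max' hne = w := max'_eq_of hne w hwm (fun j _ => hlew j)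
    rw [hmin', hmax']
    exact fun j hj => ⟨(Finset.mem_filter.mp hj).2, hmax j⟩
  · -- S5
    have ham : a ∈ S5 := Finset.mem_insert_self _ _
    have hwm : w ∈ S5 := Finset.mem_insert_of_mem
      (Finset.mem_filter.mpr ⟨Finset.mem_Ici.mpr (hlew b), le_refl _⟩)
    have hne : S5.Nonempty := ⟨a, ham⟩
    refine ⟨S5, hne, h, Or.inl ?_⟩
    have hmin' : S5.min' hne = a := min'_eq_of hne a ham (by
      intro j hj
      rcases Finset.mem_insert.mp hj with rfl | hj
      · exact le_refl _
      · exact le_trans hab (Finset.mem_Ici.mp (Finset.mem_filter.mp hj).1))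
    have hmax' : S5.max' hne = w := max'_eq_of hne w hwm (fun j _ => hlew j)
    rw [hmin', hmax']
    intro j hj
    rcases Finset.mem_insert.mp hj with rfl | hj
    · exact ⟨hmin j, hmin w⟩
    · exact ⟨hmin j, (Finset.mem_filter.mp hj).2⟩

/-- Convert a "good" finset into the indexed-subsequence form of the theorem. -/
lemma finset_to_subseq (n : ℕ) (hn : 0 < n) (x : Fin n → ℕ)
    (S : Finset (Fin n)) (hS : S.Nonempty) (hcard : 5 * S.card ≥ n)
    (hgood : (∀ j ∈ S, x (S.min' hS) ≤ x j ∧ x j ≤ x (S.max' hS)) ∨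
             (∀ j ∈ S, x (S.max' hS) ≤ x j ∧ x j ≤ x (S.min' hS))) :
    ∃ (l : ℕ) (hl : 0 < l) (i : Fin l → Fin n), StrictMono i ∧ 5 * l ≥ n ∧
      ((∀ j : Fin l, x (i ⟨0, hl⟩) ≤ x (i j) ∧ x (i j) ≤ x (i ⟨l - 1, Nat.sub_lt hl one_pos⟩)) ∨
       (∀ j : Fin l, x (i ⟨l - 1, Nat.sub_lt hl one_pos⟩) ≤ x (i j) ∧ x (i j) ≤ x (i ⟨0, hl⟩))) := by
  have hl : 0 < S.card := Finset.card_pos.mpr hS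
  set e := S.orderIsoOfFin rfl with he
  refine ⟨S.card, hl, fun j => (e j : Fin n), ?_, hcard, ?_⟩
  · intro u v huv
    exact Subtype.coe_lt_coe.mpr (e.strictMono huv)
  · have hmem : ∀ j, ((e j : Fin n)) ∈ S := fun j => (e j).2
    have hmin : (e ⟨0, hl⟩ : Fin n) = S.min' hS := by
      apply le_antisymm
      · obtain ⟨k, hk⟩ := e.surjective ⟨S.min' hS, S.min'_mem hS⟩
        have hk2 : (⟨0, hl⟩ : Fin S.card) ≤ k := by
          rw [Fin.le_def]; exact Nat.zero_le _
        have : (e ⟨0, hl⟩ : Fin n) ≤ (e k : Fin n) :=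
          Subtype.coe_le_coe.mpr (e.monotone hk2)
        rw [hk] at this
        exact this
      · exact S.min'_le _ (hmem _)
    have hmax : (e ⟨S.card - 1, Nat.sub_lt hl one_pos⟩ : Fin n) = S.max' hS := by
      apply le_antisymm
      · exact S.le_max' _ (hmem _)
      · obtain ⟨k, hk⟩ := e.surjective ⟨S.max' hS, S.max'_mem hS⟩
        have hk2 : k ≤ (⟨S.card - 1, Nat.sub_lt hl one_pos⟩ : Fin S.card) := by
          rw [Fin.le_def]
          have := k.isLt
          simp
          omega
        have : (e k : Fin n) ≤ (e ⟨S.card - 1, Nat.sub_lt hl one_pos⟩ : Fin n) :=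
          Subtype.coe_le_coe.mpr (e.monotone hk2)
        rw [hk] at this
        exact this
    dsimp only
    rw [hmin, hmax]
    rcases hgood with h | h
    · exact Or.inl fun j => h _ (hmem j)
    · exact Or.inr fun j => h _ (hmem j)

/-- Any finite sequence of pairwise distinct natural numbers contains a monotone-extreme
subsequence of length at least a fifth of the total: either the first element is the minimum
and the last the maximum among the subsequence, or vice versa. -/
theorem stmt0 (n : ℕ) (hn : 0 < n) (x : Fin n → ℕ) (hx : Function.Injective x) :
    ∃ (l : ℕ) (hl : 0 < l) (i : Fin l → Fin n), StrictMono i ∧ 5 * l ≥ n ∧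
      ((∀ j : Fin l, x (i ⟨0, hl⟩) ≤ x (i j) ∧ x (i j) ≤ x (i ⟨l - 1, Nat.sub_lt hl one_pos⟩)) ∨
       (∀ j : Fin l, x (i ⟨l - 1, Nat.sub_lt hl one_pos⟩) ≤ x (i j) ∧ x (i j) ≤ x (i ⟨0, hl⟩))) := by
  have huniv : (Finset.univ : Finset (Fin n)).Nonempty := ⟨⟨0, hn⟩, Finset.mem_univ _⟩
  obtain ⟨a, -, hmin⟩ := Finset.exists_min_image Finset.univ x huniv
  obtain ⟨b, -, hmax⟩ := Finset.exists_max_image Finset.univ x huniv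
  have hmin : ∀ j, x a ≤ x j := fun j => hmin j (Finset.mem_univ _)
  have hmax : ∀ j, x j ≤ x b := fun j => hmax j (Finset.mem_univ _)
  rcases le_total a b with hab | hab
  · obtain ⟨S, hS, hc, hg⟩ := exists_good_finset n hn x a b hab hmin hmax
    exact finset_to_subseq n hn x S hS hc hg
  · set y : Fin n → ℕ := fun j => x b - x j with hy
    have hymin : ∀ j, y b ≤ y j := fun j => by simp [hy]
    have hymax : ∀ j, y j ≤ y a := fun j => by
      simp only [hy]
      exact Nat.sub_le_sub_left (hmin j) _
    obtain ⟨S, hS, hc, hg⟩ := exists_good_finset n hn y b a hab hymin hymax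
    refine finset_to_subseq n hn x S hS hc ?_
    have key : ∀ u v : Fin n, y u ≤ y v → x v ≤ x u := by
      intro u v huv
      have h1 := hmax u
      have h2 := hmax v
      simp only [hy] at huv
      omega
    rcases hg with hg | hg
    · exact Or.inr fun j hj => ⟨key _ _ ((hg j hj).2), key _ _ ((hg j hj).1)⟩
    · exact Or.inl fun j hj => ⟨key _ _ ((hg j hj).2), key _ _ ((hg j hj).1)⟩
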